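/- Let r₁, λ, ψ, u, c > 0, and define ξ_L, ξ_R, v_L, v_R, κ_L, κ_R and the functions a₋*, a₊* on [v_R, v_L] as follows: ξ_L := (−1 + √(1+8r₁/ψ²))/2, ξ_R := (−1 − √(1+8(r₁+λ)/ψ²))/2, v_L := u + c − r₁c/(ξ_L ψ²), v_R := r₁(u+c)/(r₁+λ) − r₁c/(ξ_R ψ²), κ_L := r₁c²/(2ψ²), κ_R := r₁²c²/(2(r₁+λ)ψ²), a₋*(x) := 1 − [(√(2r₁)/ψ)·φ((x−u)/√κ_L)] / [(√(2r₁)/ψ)·φ((v_L−u)/√κ_L) + Φ((v_L−u)/√κ_L) − Φ((x−u)/√κ_L)], and a₊*(x) := 1 − [(√(2(r₁+λ))/ψ)·φ((x−r₁u/(r₁+λ))/√κ_R)] / [(√(2(r₁+λ))/ψ)·φ((v_R−r₁u/(r₁+λ))/√κ_R) + Φ((v_R−r₁u/(r₁+λ))/√κ_R) − Φ((x−r₁u/(r₁+λ))/√κ_R)]. If v_R < v_L, then there exists a unique v* ∈ (v_R, v_L) such that a₋*(v*) = a₊*(v*). -/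

import Mathlib

/-!
Write `g k b y = normRatio k b y = k φ(y) / D` with `D = normRatioDen k b y = k φ(b) + Φ(b) - Φ(y)`.
Then `a₋*(x) = 1 - g k₁ b₁ ((x - u)/√κ_L)` and `a₊*(x) = 1 - g k₂ b₂ ((x - r₁u/(r₁+λ))/√κ_R)`,
where `b₁`, `b₂` are the images of `v_L`, `v_R`; since `g k b b = 1`, `a₋*(v_L) = a₊*(v_R) = 0`.
The quadratics defining `ξ_L > 0 > ξ_R` give `k₁ b₁ = 1 - ξ_L ≤ 1 ≤ 1 - ξ_R = k₂ b₂`.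

Since `(D - k φ)' = φ(y) (k y - 1)` and `D - k φ` vanishes at `b`, we get `k φ < D` on the side of
`b` where `k y - 1` has the sign of `y - b`; there `g < 1`. Moreover `g' = k φ (φ - y D) / D²` and
`(φ - y D)' = -D < 0`, while `φ - y D = φ(b) (1 - k b)` at `b`; so `g` increases left of `b` when
`k b ≤ 1` and decreases right of `b` when `k b ≥ 1`. Hence `a₋* - a₊*` is strictly decreasing on
`[v_R, v_L]`, positive at `v_R` and negative at `v_L`.
-/

noncomputable def normPdf (x : ℝ) : ℝ := Real.exp (-(x ^ 2) / 2) / Real.sqrt (2 * Real.pi)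

noncomputable def normCdf (x : ℝ) : ℝ := ∫ t in Set.Iic x, normPdf t

open Set

lemma normPdf_pos (x : ℝ) : 0 < normPdf x := by
  unfold normPdf
  positivity

lemma hasDerivAt_normPdf (x : ℝ) : HasDerivAt normPdf (-x * normPdf x) x := by
  have h : HasDerivAt (fun y : ℝ => -(y ^ 2) / 2) (-x) x :=
    ((hasDerivAt_pow 2 x).neg.div_const 2).congr_deriv (by ring)
  exact (h.exp.div_const _).congr_deriv (by rw [normPdf]; ring)

lemma continuous_normPdf : Continuous normPdf :=
  continuous_iff_continuousAt.2 fun x => (hasDerivAt_normPdf x).continuousAt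

lemma integrable_normPdf : MeasureTheory.Integrable normPdf := by
  refine ((integrable_exp_neg_mul_sq one_half_pos).div_const (Real.sqrt (2 * Real.pi))).congr
    (.of_forall fun x => ?_)
  simp only [normPdf]
  ring_nf

lemma hasDerivAt_normCdf (x : ℝ) : HasDerivAt normCdf (normPdf x) x := by
  have hFTC : HasDerivAt (fun y => ∫ t in (0 : ℝ)..y, normPdf t) (normPdf x) x :=
    intervalIntegral.integral_hasDerivAt_right integrable_normPdf.intervalIntegrable
      continuous_normPdf.aestronglyMeasurable.stronglyMeasurableAtFilter
      continuous_normPdf.continuousAt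
  have hsplit : ∀ y, normCdf y = normCdf 0 + ∫ t in (0 : ℝ)..y, normPdf t := fun y => by
    rw [← intervalIntegral.integral_Iic_sub_Iic integrable_normPdf.integrableOn
      integrable_normPdf.integrableOn, normCdf, normCdf]
    ring
  rw [funext hsplit]
  exact hFTC.const_add _

lemma existsUnique_mem_Ioo_eq_of_strictMonoOn_of_strictAntiOn {α : Type*}
    [ConditionallyCompleteLinearOrder α] [TopologicalSpace α] [OrderTopology α]
    [DenselyOrdered α] {f g : α → ℝ} {a b : α} (hab : a ≤ b)
    (hf : ContinuousOn f (Icc a b)) (hg : ContinuousOn g (Icc a b))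
    (hf_mono : StrictMonoOn f (Icc a b)) (hg_anti : StrictAntiOn g (Icc a b))
    (ha : f a < g a) (hb : g b < f b) :
    ∃! x, x ∈ Ioo a b ∧ f x = g x := by
  have hd_mono : StrictMonoOn (fun x => f x - g x) (Icc a b) := fun x hx y hy hxy =>
    sub_lt_sub (hf_mono hx hy hxy) (hg_anti hx hy hxy)
  obtain ⟨x, hx, hdx⟩ := intermediate_value_Ioo hab (hf.sub hg)
    (show (0 : ℝ) ∈ Ioo (f a - g a) (f b - g b) from ⟨by linarith, by linarith⟩)
  refine ⟨x, ⟨hx, sub_eq_zero.1 hdx⟩, fun y ⟨hy, hfgy⟩ => ?_⟩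
  exact hd_mono.injOn (Ioo_subset_Icc_self hy) (Ioo_subset_Icc_self hx)
    (by simp only [hfgy, sub_self, ← hdx, Pi.sub_apply])

lemma strictAntiOn_of_hasDerivAt_neg {D : Set ℝ} (hD : Convex ℝ D) {f f' : ℝ → ℝ}
    (hf : ∀ x, HasDerivAt f (f' x) x) (hf' : ∀ x ∈ interior D, f' x < 0) : StrictAntiOn f D :=
  strictAntiOn_of_hasDerivWithinAt_neg hD (fun x _ => (hf x).continuousAt.continuousWithinAt)
    (fun x _ => (hf x).hasDerivWithinAt) hf'

lemma strictMonoOn_of_hasDerivAt_pos {D : Set ℝ} (hD : Convex ℝ D) {f f' : ℝ → ℝ}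
    (hf : ∀ x, HasDerivAt f (f' x) x) (hf' : ∀ x ∈ interior D, 0 < f' x) : StrictMonoOn f D :=
  strictMonoOn_of_hasDerivWithinAt_pos hD (fun x _ => (hf x).continuousAt.continuousWithinAt)
    (fun x _ => (hf x).hasDerivWithinAt) hf'

noncomputable def normRatioDen (k b y : ℝ) : ℝ := k * normPdf b + normCdf b - normCdf y

noncomputable def normRatio (k b y : ℝ) : ℝ := k * normPdf y / normRatioDen k b y

lemma normRatioDen_self (k b : ℝ) : normRatioDen k b b = k * normPdf b := by
  rw [normRatioDen]
  ring

lemma hasDerivAt_normRatioDen (k b y : ℝ) : HasDerivAt (normRatioDen k b) (-normPdf y) y :=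
  (hasDerivAt_normCdf y).const_sub _

lemma continuous_normRatioDen (k b : ℝ) : Continuous (normRatioDen k b) :=
  continuous_iff_continuousAt.2 fun y => (hasDerivAt_normRatioDen k b y).continuousAt

lemma hasDerivAt_normRatioDen_sub_mul_normPdf (k b y : ℝ) :
    HasDerivAt (fun y => normRatioDen k b y - k * normPdf y) (normPdf y * (k * y - 1)) y :=
  ((hasDerivAt_normRatioDen k b y).sub ((hasDerivAt_normPdf y).const_mul k)).congr_deriv
    (by ring)

lemma hasDerivAt_normPdf_sub_mul_normRatioDen (k b y : ℝ) :
    HasDerivAt (fun y => normPdf y - y * normRatioDen k b y) (-normRatioDen k b y) y :=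
  ((hasDerivAt_normPdf y).sub ((hasDerivAt_id y).mul (hasDerivAt_normRatioDen k b y))).congr_deriv
    (by simp only [id]; ring)

lemma hasDerivAt_normRatio {k b y : ℝ} (hD : normRatioDen k b y ≠ 0) :
    HasDerivAt (normRatio k b)
      (k * normPdf y * (normPdf y - y * normRatioDen k b y) / normRatioDen k b y ^ 2) y :=
  (((hasDerivAt_normPdf y).const_mul k).div (hasDerivAt_normRatioDen k b y) hD).congr_deriv
    (by ring)

lemma normRatio_self {k : ℝ} (hk : 0 < k) (b : ℝ) : normRatio k b b = 1 := by
  rw [normRatio, normRatioDen_self]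
  exact div_self (mul_pos hk (normPdf_pos b)).ne'

section Left

variable {k b : ℝ} (hk : 0 < k) (hkb : k * b ≤ 1)
include hk hkb

lemma mul_normPdf_lt_normRatioDen_of_lt {y : ℝ} (hy : y < b) :
    k * normPdf y < normRatioDen k b y := by
  have hanti : StrictAntiOn (fun y => normRatioDen k b y - k * normPdf y) (Iic b) :=
    strictAntiOn_of_hasDerivAt_neg (convex_Iic b) (hasDerivAt_normRatioDen_sub_mul_normPdf k b)
      fun z hz => by
        rw [interior_Iic] at hz
        have : k * z < 1 := by nlinarith [mem_Iio.1 hz]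
        nlinarith [normPdf_pos z]
  have := hanti hy.le self_mem_Iic hy
  simp only [normRatioDen_self, sub_self] at this
  linarith

lemma normRatioDen_pos_of_le {y : ℝ} (hy : y ≤ b) : 0 < normRatioDen k b y := by
  rcases hy.lt_or_eq with hy | rfl
  · exact (mul_pos hk (normPdf_pos y)).trans (mul_normPdf_lt_normRatioDen_of_lt hk hkb hy)
  · rw [normRatioDen_self]
    exact mul_pos hk (normPdf_pos y)

lemma mul_normRatioDen_lt_normPdf_of_lt {y : ℝ} (hy : y < b) :
    y * normRatioDen k b y < normPdf y := by
  have hanti : StrictAntiOn (fun y => normPdf y - y * normRatioDen k b y) (Iic b) :=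
    strictAntiOn_of_hasDerivAt_neg (convex_Iic b) (hasDerivAt_normPdf_sub_mul_normRatioDen k b)
      fun z hz => by
        rw [interior_Iic] at hz
        exact neg_neg_of_pos (normRatioDen_pos_of_le hk hkb hz.le)
  have := hanti hy.le self_mem_Iic hy
  simp only [normRatioDen_self] at this
  nlinarith [normPdf_pos b]

lemma normRatio_lt_one_of_lt {y : ℝ} (hy : y < b) : normRatio k b y < 1 :=
  (div_lt_one (normRatioDen_pos_of_le hk hkb hy.le)).2 (mul_normPdf_lt_normRatioDen_of_lt hk hkb hy)

lemma continuousOn_normRatio_Iic : ContinuousOn (normRatio k b) (Iic b) :=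
  (continuous_const.mul continuous_normPdf).continuousOn.div
    (continuous_normRatioDen k b).continuousOn fun _ hy => (normRatioDen_pos_of_le hk hkb hy).ne'

lemma strictMonoOn_normRatio_Iic : StrictMonoOn (normRatio k b) (Iic b) := by
  refine strictMonoOn_of_hasDerivWithinAt_pos (convex_Iic b) (continuousOn_normRatio_Iic hk hkb)
    (fun y hy => (hasDerivAt_normRatio ?_).hasDerivWithinAt) fun y hy => ?_
  all_goals rw [interior_Iic] at hy
  · exact (normRatioDen_pos_of_le hk hkb hy.le).ne'
  · have hD := normRatioDen_pos_of_le hk hkb hy.le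
    have hh := sub_pos.2 (mul_normRatioDen_lt_normPdf_of_lt hk hkb hy)
    have := normPdf_pos y
    positivity

end Left

section Right

variable {k b : ℝ} (hk : 0 < k) (hkb : 1 ≤ k * b)
include hk hkb

lemma mul_normPdf_lt_normRatioDen_of_gt {y : ℝ} (hy : b < y) :
    k * normPdf y < normRatioDen k b y := by
  have hmono : StrictMonoOn (fun y => normRatioDen k b y - k * normPdf y) (Ici b) :=
    strictMonoOn_of_hasDerivAt_pos (convex_Ici b) (hasDerivAt_normRatioDen_sub_mul_normPdf k b)
      fun z hz => by
        rw [interior_Ici] at hz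
        have : 1 < k * z := by nlinarith [mem_Ioi.1 hz]
        nlinarith [normPdf_pos z]
  have := hmono self_mem_Ici hy.le hy
  simp only [normRatioDen_self, sub_self] at this
  linarith

lemma normRatioDen_pos_of_ge {y : ℝ} (hy : b ≤ y) : 0 < normRatioDen k b y := by
  rcases hy.lt_or_eq with hy | rfl
  · exact (mul_pos hk (normPdf_pos y)).trans (mul_normPdf_lt_normRatioDen_of_gt hk hkb hy)
  · rw [normRatioDen_self]
    exact mul_pos hk (normPdf_pos b)

lemma normPdf_lt_mul_normRatioDen_of_gt {y : ℝ} (hy : b < y) :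
    normPdf y < y * normRatioDen k b y := by
  have hanti : StrictAntiOn (fun y => normPdf y - y * normRatioDen k b y) (Ici b) :=
    strictAntiOn_of_hasDerivAt_neg (convex_Ici b) (hasDerivAt_normPdf_sub_mul_normRatioDen k b)
      fun z hz => by
        rw [interior_Ici] at hz
        exact neg_neg_of_pos (normRatioDen_pos_of_ge hk hkb hz.le)
  have := hanti self_mem_Ici hy.le hy
  simp only [normRatioDen_self] at this
  nlinarith [normPdf_pos b]

lemma normRatio_lt_one_of_gt {y : ℝ} (hy : b < y) : normRatio k b y < 1 :=
  (div_lt_one (normRatioDen_pos_of_ge hk hkb hy.le)).2 (mul_normPdf_lt_normRatioDen_of_gt hk hkb hy)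

lemma continuousOn_normRatio_Ici : ContinuousOn (normRatio k b) (Ici b) :=
  (continuous_const.mul continuous_normPdf).continuousOn.div
    (continuous_normRatioDen k b).continuousOn fun _ hy => (normRatioDen_pos_of_ge hk hkb hy).ne'

lemma strictAntiOn_normRatio_Ici : StrictAntiOn (normRatio k b) (Ici b) := by
  refine strictAntiOn_of_hasDerivWithinAt_neg (convex_Ici b) (continuousOn_normRatio_Ici hk hkb)
    (fun y hy => (hasDerivAt_normRatio ?_).hasDerivWithinAt) fun y hy => ?_
  all_goals rw [interior_Ici] at hy
  · exact (normRatioDen_pos_of_ge hk hkb hy.le).ne'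
  · have hD := normRatioDen_pos_of_ge hk hkb hy.le
    have hh := sub_neg.2 (normPdf_lt_mul_normRatioDen_of_gt hk hkb hy)
    exact div_neg_of_neg_of_pos (mul_neg_of_pos_of_neg (mul_pos hk (normPdf_pos y)) hh)
      (pow_pos hD 2)

end Right

lemma existsUnique_mem_Ioo_normRatio_eq {k₁ k₂ μ₁ μ₂ σ₁ σ₂ vR vL : ℝ} (hk₁ : 0 < k₁)
    (hk₂ : 0 < k₂) (hσ₁ : 0 < σ₁) (hσ₂ : 0 < σ₂) (hkb₁ : k₁ * ((vL - μ₁) / σ₁) ≤ 1)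
    (hkb₂ : 1 ≤ k₂ * ((vR - μ₂) / σ₂)) (hv : vR < vL) :
    ∃! x, x ∈ Ioo vR vL ∧ normRatio k₁ ((vL - μ₁) / σ₁) ((x - μ₁) / σ₁) =
      normRatio k₂ ((vR - μ₂) / σ₂) ((x - μ₂) / σ₂) := by
  have hs₁ : StrictMono fun x => (x - μ₁) / σ₁ := fun x y h => by dsimp only; gcongr
  have hs₂ : StrictMono fun x => (x - μ₂) / σ₂ := fun x y h => by dsimp only; gcongr
  have hmaps₁ : MapsTo (fun x => (x - μ₁) / σ₁) (Icc vR vL) (Iic ((vL - μ₁) / σ₁)) :=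
    fun x hx => hs₁.monotone hx.2
  have hmaps₂ : MapsTo (fun x => (x - μ₂) / σ₂) (Icc vR vL) (Ici ((vR - μ₂) / σ₂)) :=
    fun x hx => hs₂.monotone hx.1
  refine existsUnique_mem_Ioo_eq_of_strictMonoOn_of_strictAntiOn hv.le
    ((continuousOn_normRatio_Iic hk₁ hkb₁).comp (by fun_prop) hmaps₁)
    ((continuousOn_normRatio_Ici hk₂ hkb₂).comp (by fun_prop) hmaps₂)
    ((strictMonoOn_normRatio_Iic hk₁ hkb₁).comp (hs₁.strictMonoOn _) hmaps₁)
    ((strictAntiOn_normRatio_Ici hk₂ hkb₂).comp_strictMonoOn (hs₂.strictMonoOn _) hmaps₂) ?_ ?_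
  · simp only [normRatio_self hk₂]
    exact normRatio_lt_one_of_lt hk₁ hkb₁ (hs₁ hv)
  · simp only [normRatio_self hk₁]
    exact normRatio_lt_one_of_gt hk₂ hkb₂ (hs₂ hv)

lemma sqrt_two_mul_div_mul_div_sqrt {p ψ s κ : ℝ} (hp : 0 < p) (hψ : 0 < ψ) (hs : 0 < s)
    (hκ : κ = s ^ 2 / (2 * p * ψ ^ 2)) (z : ℝ) :
    Real.sqrt (2 * p) / ψ * (z / Real.sqrt κ) = 2 * p * z / s := by
  have h2p : Real.sqrt (2 * p) ^ 2 = 2 * p := Real.sq_sqrt (by positivity)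
  have hsqrtκ : Real.sqrt κ = s / (Real.sqrt (2 * p) * ψ) := by
    rw [Real.sqrt_eq_iff_mul_self_eq_of_pos (by positivity), hκ]
    field_simp
    rw [h2p]
  rw [hsqrtκ]
  field_simp
  rw [h2p]

lemma scaled_vL_sub_mean_le_one {r ψ c ξ u v : ℝ} (hr : 0 < r) (hψ : 0 < ψ) (hc : 0 < c)
    (hξ : ξ = (-1 + Real.sqrt (1 + 8 * r / ψ ^ 2)) / 2) (hv : v = u + c - r * c / (ξ * ψ ^ 2)) :
    2 * r * (v - u) / (r * c) ≤ 1 := by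
  have ht : 0 < r / ψ ^ 2 := by positivity
  rw [mul_div_assoc] at hξ
  have hroot_gt : 1 < Real.sqrt (1 + 8 * (r / ψ ^ 2)) := Real.lt_sqrt_of_sq_lt (by linarith)
  have hroot_le : Real.sqrt (1 + 8 * (r / ψ ^ 2)) ≤ 1 + 4 * (r / ψ ^ 2) :=
    Real.sqrt_le_iff.2 ⟨by positivity, by nlinarith⟩
  have hξ_pos : 0 < ξ := by linarith
  have hξ_le : ξ * ψ ^ 2 ≤ 2 * r := by
    rw [← le_div_iff₀ (by positivity), mul_div_assoc]
    linarith
  have hscaled : 2 * r * (v - u) / (r * c) = 2 - 2 * r / (ξ * ψ ^ 2) := by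
    rw [hv]; field_simp; ring
  rw [hscaled, sub_le_iff_le_add, ← sub_le_iff_le_add', le_div_iff₀ (by positivity)]
  linarith

lemma one_le_scaled_vR_sub_mean {r lam ψ c ξ u v : ℝ} (hr : 0 < r) (hrl : 0 < r + lam)
    (hc : 0 < c) (hξ : ξ ≤ 0) (hv : v = r * (u + c) / (r + lam) - r * c / (ξ * ψ ^ 2)) :
    1 ≤ 2 * (r + lam) * (v - r * u / (r + lam)) / (r * c) := by
  have hscaled : 2 * (r + lam) * (v - r * u / (r + lam)) / (r * c) =
      2 - 2 * (r + lam) / (ξ * ψ ^ 2) := by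
    rw [hv]; field_simp; ring
  have : 2 * (r + lam) / (ξ * ψ ^ 2) ≤ 0 :=
    div_nonpos_of_nonneg_of_nonpos (by positivity) (mul_nonpos_of_nonpos_of_nonneg hξ (sq_nonneg ψ))
  linarith

theorem vstar_exists_unique_general (r₁ lam ψ u c ξL ξR vL vR κL κR : ℝ)
    (hr : 0 < r₁) (hlam : 0 < lam) (hψ : 0 < ψ) (hc : 0 < c)
    (hξL : ξL = (-1 + Real.sqrt (1 + 8 * r₁ / ψ ^ 2)) / 2)
    (hξR : ξR = (-1 - Real.sqrt (1 + 8 * (r₁ + lam) / ψ ^ 2)) / 2)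
    (hvL : vL = u + c - r₁ * c / (ξL * ψ ^ 2))
    (hvR : vR = r₁ * (u + c) / (r₁ + lam) - r₁ * c / (ξR * ψ ^ 2))
    (hκL : κL = r₁ * c ^ 2 / (2 * ψ ^ 2))
    (hκR : κR = r₁ ^ 2 * c ^ 2 / (2 * (r₁ + lam) * ψ ^ 2))
    (aminus aplus : ℝ → ℝ)
    (haminus : ∀ x, aminus x = 1 -
      ((Real.sqrt (2 * r₁) / ψ) * normPdf ((x - u) / Real.sqrt κL)) /
        ((Real.sqrt (2 * r₁) / ψ) * normPdf ((vL - u) / Real.sqrt κL)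
          + normCdf ((vL - u) / Real.sqrt κL)
          - normCdf ((x - u) / Real.sqrt κL)))
    (haplus : ∀ x, aplus x = 1 -
      ((Real.sqrt (2 * (r₁ + lam)) / ψ) * normPdf ((x - r₁ * u / (r₁ + lam)) / Real.sqrt κR)) /
        ((Real.sqrt (2 * (r₁ + lam)) / ψ) * normPdf ((vR - r₁ * u / (r₁ + lam)) / Real.sqrt κR)
          + normCdf ((vR - r₁ * u / (r₁ + lam)) / Real.sqrt κR)
          - normCdf ((x - r₁ * u / (r₁ + lam)) / Real.sqrt κR)))
    (hvRL : vR < vL) :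
    ∃! vstar : ℝ, vstar ∈ Set.Ioo vR vL ∧ aminus vstar = aplus vstar := by
  have hrl : 0 < r₁ + lam := by positivity
  have hκL_pos : 0 < κL := by rw [hκL]; positivity
  have hκR_pos : 0 < κR := by rw [hκR]; positivity
  have hscaleL := sqrt_two_mul_div_mul_div_sqrt (κ := κL) hr hψ (mul_pos hr hc)
    (by rw [hκL]; field_simp)
  have hscaleR := sqrt_two_mul_div_mul_div_sqrt (κ := κR) hrl hψ (mul_pos hr hc)
    (by rw [hκR]; ring)
  have hξR_nonpos : ξR ≤ 0 := by
    rw [hξR]; linarith [Real.sqrt_nonneg (1 + 8 * (r₁ + lam) / ψ ^ 2)]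
  simp_rw [haminus, haplus, sub_right_inj]
  exact existsUnique_mem_Ioo_normRatio_eq (by positivity) (by positivity)
    (Real.sqrt_pos.2 hκL_pos) (Real.sqrt_pos.2 hκR_pos)
    (by rw [hscaleL]; exact scaled_vL_sub_mean_le_one hr hψ hc hξL hvL)
    (by rw [hscaleR]; exact one_le_scaled_vR_sub_mean hr hrl hc hξR_nonpos hvR) hvRL

/-- If v_R < v_L, there is a unique v* ∈ (v_R, v_L) with
a₋*(v*) = a₊*(v*). -/
theorem vstar_exists_unique (r₁ lam ψ u c ξL ξR vL vR κL κR : ℝ)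
    (hr : 0 < r₁) (hlam : 0 < lam) (hψ : 0 < ψ) (hu : 0 < u) (hc : 0 < c)
    (hξL : ξL = (-1 + Real.sqrt (1 + 8 * r₁ / ψ ^ 2)) / 2)
    (hξR : ξR = (-1 - Real.sqrt (1 + 8 * (r₁ + lam) / ψ ^ 2)) / 2)
    (hvL : vL = u + c - r₁ * c / (ξL * ψ ^ 2))
    (hvR : vR = r₁ * (u + c) / (r₁ + lam) - r₁ * c / (ξR * ψ ^ 2))
    (hκL : κL = r₁ * c ^ 2 / (2 * ψ ^ 2))
    (hκR : κR = r₁ ^ 2 * c ^ 2 / (2 * (r₁ + lam) * ψ ^ 2))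
    (aminus aplus : ℝ → ℝ)
    (haminus : ∀ x, aminus x = 1 -
      ((Real.sqrt (2 * r₁) / ψ) * normPdf ((x - u) / Real.sqrt κL)) /
        ((Real.sqrt (2 * r₁) / ψ) * normPdf ((vL - u) / Real.sqrt κL)
          + normCdf ((vL - u) / Real.sqrt κL)
          - normCdf ((x - u) / Real.sqrt κL)))
    (haplus : ∀ x, aplus x = 1 -
      ((Real.sqrt (2 * (r₁ + lam)) / ψ) * normPdf ((x - r₁ * u / (r₁ + lam)) / Real.sqrt κR)) /
        ((Real.sqrt (2 * (r₁ + lam)) / ψ) * normPdf ((vR - r₁ * u / (r₁ + lam)) / Real.sqrt κR)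
          + normCdf ((vR - r₁ * u / (r₁ + lam)) / Real.sqrt κR)
          - normCdf ((x - r₁ * u / (r₁ + lam)) / Real.sqrt κR)))
    (hvRL : vR < vL) :
    ∃! vstar : ℝ, vstar ∈ Set.Ioo vR vL ∧ aminus vstar = aplus vstar :=
  vstar_exists_unique_general r₁ lam ψ u c ξL ξR vL vR κL κR hr hlam hψ hc hξL hξR hvL hvR hκL hκR
    aminus aplus haminus haplus hvRL
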